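/- arXiv:0705.2848 — 2 statements merged into one kernel-verified Lean document; each statement's English description precedes it below -/
import Mathlib

section
/- Let k₁ > 0, N_c > 0, and R > 0. Define f(ρ) = (1/N_c)·ln(1 + k₁ρ/(1+ρ)) − ρR for ρ ≥ 0. Then sup_{ρ≥0} f(ρ) > 0 if and only if R < k₁/N_c. -/
/-!
Write `g` for the objective. Since `log (1 + t) ≤ t` and `k₁ρ/(1+ρ) ≤ k₁ρ`, we have
`g ρ ≤ ρ (k₁/N_c - R)`, so `g ≤ 0` on `ρ ≥ 0` as soon as `R ≥ k₁/N_c`. Conversely `g 0 = 0`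
and `g'(0) = k₁/N_c - R`, so `g` is positive just to the right of `0` when `R < k₁/N_c`.
The supremum is a genuine one because `g ρ ≤ log (1 + k₁) / N_c`.
-/

open Set

theorem exists_gt_lt_of_hasDerivAt_pos {f : ℝ → ℝ} {a f' : ℝ} (hf : HasDerivAt f f' a)
    (hf' : 0 < f') : ∃ x > a, f a < f x := by
  obtain ⟨t, hslope, ht⟩ :=
    ((hf.tendsto_slope_zero_right.eventually (lt_mem_nhds hf')).and self_mem_nhdsWithin).exists
  have ht : 0 < t := ht
  refine ⟨a + t, lt_add_of_pos_right a ht, ?_⟩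
  rw [smul_eq_mul] at hslope
  exact sub_pos.mp (pos_of_mul_pos_right hslope (inv_nonneg.mpr ht.le))

noncomputable def gallagerObjective (k1 Nc R ρ : ℝ) : ℝ :=
  1 / Nc * Real.log (1 + k1 * ρ / (1 + ρ)) - ρ * R

section

variable {k1 Nc R ρ : ℝ}

@[simp]
theorem gallagerObjective_zero : gallagerObjective k1 Nc R 0 = 0 := by
  simp [gallagerObjective]

theorem gallagerObjective_le_mul_sub (hk1 : 0 ≤ k1) (hNc : 0 ≤ Nc) (hρ : 0 ≤ ρ) :
    gallagerObjective k1 Nc R ρ ≤ ρ * (k1 / Nc - R) := by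
  have ht : 0 ≤ k1 * ρ / (1 + ρ) := by positivity
  have hlog : Real.log (1 + k1 * ρ / (1 + ρ)) ≤ k1 * ρ := by
    calc Real.log (1 + k1 * ρ / (1 + ρ)) ≤ k1 * ρ / (1 + ρ) := by
          linarith [Real.log_le_sub_one_of_pos (by linarith : 0 < 1 + k1 * ρ / (1 + ρ))]
      _ ≤ k1 * ρ := div_le_self (by positivity) (by linarith)
  calc gallagerObjective k1 Nc R ρ ≤ 1 / Nc * (k1 * ρ) - ρ * R := by
        unfold gallagerObjective; gcongr
    _ = ρ * (k1 / Nc - R) := by ring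

theorem gallagerObjective_le_log (hk1 : 0 ≤ k1) (hNc : 0 ≤ Nc) (hR : 0 ≤ R) (hρ : 0 ≤ ρ) :
    gallagerObjective k1 Nc R ρ ≤ 1 / Nc * Real.log (1 + k1) := by
  have ht : k1 * ρ / (1 + ρ) ≤ k1 := by
    rw [div_le_iff₀ (by linarith)]
    nlinarith
  have hlog : Real.log (1 + k1 * ρ / (1 + ρ)) ≤ Real.log (1 + k1) :=
    Real.log_le_log (by positivity) (by linarith)
  unfold gallagerObjective
  linarith [mul_le_mul_of_nonneg_left hlog (one_div_nonneg.mpr hNc), mul_nonneg hρ hR]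

theorem bddAbove_gallagerObjective_image_Ici (hk1 : 0 ≤ k1) (hNc : 0 ≤ Nc) (hR : 0 ≤ R) :
    BddAbove (gallagerObjective k1 Nc R '' Ici 0) :=
  ⟨_, forall_mem_image.mpr fun _ hρ ↦ gallagerObjective_le_log hk1 hNc hR hρ⟩

theorem hasDerivAt_gallagerObjective_zero :
    HasDerivAt (gallagerObjective k1 Nc R) (k1 / Nc - R) 0 := by
  have hfrac : HasDerivAt (fun ρ : ℝ ↦ 1 + k1 * ρ / (1 + ρ)) k1 0 := by
    simpa using (((hasDerivAt_id (0 : ℝ)).const_mul k1).div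
      ((hasDerivAt_id (0 : ℝ)).const_add 1) (by norm_num)).const_add 1
  have hlog := (hfrac.log (by norm_num)).const_mul (1 / Nc)
  refine (hlog.sub ((hasDerivAt_id (0 : ℝ)).mul_const R)).congr_deriv ?_
  simp only [mul_zero, add_zero, div_one, one_mul]
  ring

end

/-- The random-coding exponent objective has positive supremum over `ρ ≥ 0`
iff the rate is below `R_max = k₁/N_c`. -/
theorem positive_exponent_iff (k1 Nc R : ℝ) (hk1 : 0 < k1) (hNc : 0 < Nc) (hR : 0 < R) :
    0 < sSup ((fun ρ : ℝ => (1 / Nc) * Real.log (1 + k1 * ρ / (1 + ρ)) - ρ * R) '' Ici 0)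
      ↔ R < k1 / Nc := by
  change 0 < sSup (gallagerObjective k1 Nc R '' Ici 0) ↔ _
  rw [lt_csSup_iff (bddAbove_gallagerObjective_image_Ici hk1.le hNc.le hR.le)
    (nonempty_Ici.image _), exists_mem_image]
  constructor
  · rintro ⟨ρ, hρ, hpos⟩
    have hmul := hpos.trans_le (gallagerObjective_le_mul_sub hk1.le hNc.le hρ)
    exact sub_pos.mp (pos_of_mul_pos_right hmul hρ)
  · intro hRlt
    obtain ⟨ρ, hρ, hpos⟩ :=
      exists_gt_lt_of_hasDerivAt_pos hasDerivAt_gallagerObjective_zero (sub_pos.mpr hRlt)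
    exact ⟨ρ, hρ.le, by simpa using hpos⟩
end

section
/- Let s > 0 (the per-coherence-subspace SNR, s = N_c·SNR) and N_c > 2. Define K(η) = η(1−η)s² / ((N_c−1)(1 + ηs) + (1−η)s) for η ∈ [0,1]. Then K is maximized over [0,1] at η* = ((s + N_c − 1)/((N_c−2)s)) · (√(1 + (N_c−2)s/(s + N_c − 1)) − 1), and η* ∈ (0,1). -/
open Set

/-!
With `a = s + N_c - 1` and `b = (N_c - 2) s` the denominator of `K` is `a + b η`, so
`K η = s² · η (1 - η) / (a + b η)`. The critical-point equation of `η (1 - η) / (a + b η)` is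
`b η² + 2 a η - a = 0`, and at a root `y` the gap `f y - f x` has numerator
`(y - x)² (a + b y) ≥ 0`, so the root is a global maximum wherever the denominator is positive.
The stated `η*` is the positive root, which equals `1 / (√(1 + b / a) + 1) ∈ (0, 1)`.
-/

lemma mul_one_sub_div_le_of_quadratic_eq_zero {a b x y : ℝ} (hx : 0 < a + b * x)
    (hy : 0 < a + b * y) (hroot : b * y ^ 2 + 2 * a * y - a = 0) :
    x * (1 - x) / (a + b * x) ≤ y * (1 - y) / (a + b * y) := by
  rw [div_le_div_iff₀ hx hy]
  have gap : y * (1 - y) * (a + b * x) - x * (1 - x) * (a + b * y) =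
      (y - x) ^ 2 * (a + b * y) - (y - x) * (b * y ^ 2 + 2 * a * y - a) := by ring
  rw [hroot, mul_zero, sub_zero] at gap
  nlinarith [mul_nonneg (sq_nonneg (y - x)) hy.le]

section PositiveRoot

variable {a b : ℝ} (ha : 0 < a) (hb : 0 < b)
include ha hb

lemma div_mul_sqrt_one_add_div_sub_one_eq :
    a / b * (√(1 + b / a) - 1) = 1 / (√(1 + b / a) + 1) := by
  have hr : √(1 + b / a) ^ 2 = 1 + b / a := Real.sq_sqrt (by positivity)
  have hr0 : 0 ≤ √(1 + b / a) := Real.sqrt_nonneg _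
  generalize √(1 + b / a) = r at hr hr0 ⊢
  obtain rfl : b = a * (r ^ 2 - 1) := by field_simp at hr; linarith
  have hr1 : r ^ 2 - 1 ≠ 0 := (pos_of_mul_pos_right hb ha.le).ne'
  field_simp
  ring

lemma div_mul_sqrt_one_add_div_sub_one_mem_Ioo :
    a / b * (√(1 + b / a) - 1) ∈ Ioo (0 : ℝ) 1 := by
  rw [div_mul_sqrt_one_add_div_sub_one_eq ha hb]
  have hr1 : 1 < √(1 + b / a) := by
    rw [Real.lt_sqrt zero_le_one, one_pow]
    linarith [div_pos hb ha]
  exact ⟨by positivity, (div_lt_one (by linarith)).2 (by linarith)⟩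

lemma quadratic_eq_zero_at_div_mul_sqrt_one_add_div_sub_one :
    b * (a / b * (√(1 + b / a) - 1)) ^ 2 + 2 * a * (a / b * (√(1 + b / a) - 1)) - a = 0 := by
  have hr : √(1 + b / a) ^ 2 = 1 + b / a := Real.sq_sqrt (by positivity)
  calc _ = a ^ 2 / b * (√(1 + b / a) ^ 2 - 1) - a := by field_simp; ring
    _ = 0 := by rw [hr]; field_simp; ring

end PositiveRoot

/-- The optimal training-energy fraction for MMSE channel estimation. -/
theorem optimal_training_fraction (s Nc : ℝ) (hs : 0 < s) (hNc : 2 < Nc) :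
    let K : ℝ → ℝ := fun η => η * (1 - η) * s ^ 2 /
      ((Nc - 1) * (1 + η * s) + (1 - η) * s)
    let ηs : ℝ := (s + Nc - 1) / ((Nc - 2) * s) *
      (Real.sqrt (1 + (Nc - 2) * s / (s + Nc - 1)) - 1)
    ηs ∈ Ioo (0:ℝ) 1 ∧ ∀ η ∈ Icc (0:ℝ) 1, K η ≤ K ηs := by
  intro K ηs
  have ha : 0 < s + Nc - 1 := by linarith
  have hb : 0 < (Nc - 2) * s := mul_pos (by linarith) hs
  have hηs : ηs ∈ Ioo (0:ℝ) 1 := div_mul_sqrt_one_add_div_sub_one_mem_Ioo ha hb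
  have hK : ∀ η, K η = s ^ 2 * (η * (1 - η) / (s + Nc - 1 + (Nc - 2) * s * η)) := by
    intro η
    simp only [K]
    rw [mul_div_assoc']
    congr 1 <;> ring
  refine ⟨hηs, fun η hη => ?_⟩
  rw [hK, hK]
  refine mul_le_mul_of_nonneg_left ?_ (sq_nonneg s)
  exact mul_one_sub_div_le_of_quadratic_eq_zero (by nlinarith [hη.1]) (by nlinarith [hηs.1])
    (quadratic_eq_zero_at_div_mul_sqrt_one_add_div_sub_one ha hb)
end
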